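/- (ODE comparison) Let a ∈ (0,∞], let C₁, C₂ > 0, and let H, h : [0,a) → (0,∞) be differentiable functions satisfying H'(t) ≥ C₁⁻¹·h(t)⁻¹ and h'(t) ≤ C₂·H(t)⁻²·h(t) for all t ∈ [0,a). Suppose H(0)/h(0) ≥ 2C₁C₂, and set C₃ := C₁⁻¹·h(0)⁻¹ − C₂·H(0)⁻¹ > 0. Then for all t ∈ [0,a): H(t) ≥ C₃·t + H(0) and h(t) ≤ h(0)·exp(C₂/(C₃·H(0))). -/
import Mathlib


open Set

lemma deriv_nonneg_le' {f f' : ℝ → ℝ} {t : ℝ}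
    (hd : ∀ s ∈ Icc (0:ℝ) t, HasDerivAt f (f' s) s)
    (h0 : ∀ s ∈ Icc (0:ℝ) t, 0 ≤ f' s) (ht : 0 ≤ t) : f 0 ≤ f t := by
  have hmono : MonotoneOn f (Icc 0 t) := by
    apply monotoneOn_of_deriv_nonneg (convex_Icc 0 t)
    · exact fun s hs => (hd s hs).differentiableAt.continuousAt.continuousWithinAt
    · exact fun s hs => ((hd s (interior_subset hs)).differentiableAt).differentiableWithinAt
    · intro s hs
      rw [(hd s (interior_subset hs)).deriv]
      exact h0 s (interior_subset hs)
  exact hmono (left_mem_Icc.2 ht) (right_mem_Icc.2 ht) ht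


/-- **ODE comparison (cf. [Lai2022_O(2)], Lemma 3.37).**  Let `a ∈ (0, ∞]`
(encoded as `a : ℝ≥0∞` with `0 < a`; the domain `[0, a)` is the set of
`t ≥ 0` with `ENNReal.ofReal t < a`), let `C₁, C₂ > 0`, and let
`H, h : [0, a) → (0, ∞)` be differentiable functions (with derivatives
`H', h'`) satisfying `H'(t) ≥ C₁⁻¹·h(t)⁻¹` and `h'(t) ≤ C₂·H(t)⁻²·h(t)` on
`[0, a)`.  Suppose `H(0)/h(0) ≥ 2C₁C₂`, and set
`C₃ := C₁⁻¹·h(0)⁻¹ − C₂·H(0)⁻¹`.  Then `C₃ > 0`, and for all `t ∈ [0, a)`: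
`H(t) ≥ C₃·t + H(0)` and `h(t) ≤ h(0)·exp(C₂/(C₃·H(0)))`. -/
theorem ode_comparison (a : ENNReal) (ha : 0 < a)
    (C₁ C₂ : ℝ) (hC₁ : 0 < C₁) (hC₂ : 0 < C₂)
    (H h H' h' : ℝ → ℝ)
    (hpos : ∀ t : ℝ, 0 ≤ t → ENNReal.ofReal t < a → 0 < H t ∧ 0 < h t)
    (hHderiv : ∀ t : ℝ, 0 ≤ t → ENNReal.ofReal t < a → HasDerivAt H (H' t) t)
    (hhderiv : ∀ t : ℝ, 0 ≤ t → ENNReal.ofReal t < a → HasDerivAt h (h' t) t)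
    (hH' : ∀ t : ℝ, 0 ≤ t → ENNReal.ofReal t < a → C₁⁻¹ * (h t)⁻¹ ≤ H' t)
    (hh' : ∀ t : ℝ, 0 ≤ t → ENNReal.ofReal t < a → h' t ≤ C₂ * h t / H t ^ 2)
    (hinit : 2 * C₁ * C₂ ≤ H 0 / h 0) :
    0 < C₁⁻¹ * (h 0)⁻¹ - C₂ * (H 0)⁻¹ ∧
    ∀ t : ℝ, 0 ≤ t → ENNReal.ofReal t < a →
      (C₁⁻¹ * (h 0)⁻¹ - C₂ * (H 0)⁻¹) * t + H 0 ≤ H t ∧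
      h t ≤ h 0 * Real.exp (C₂ / ((C₁⁻¹ * (h 0)⁻¹ - C₂ * (H 0)⁻¹) * H 0)) := by
  have h0a : ENNReal.ofReal 0 < a := by simpa using ha
  obtain ⟨hH0, hh0⟩ := hpos 0 le_rfl h0a
  set C₃ : ℝ := C₁⁻¹ * (h 0)⁻¹ - C₂ * (H 0)⁻¹ with hC₃def
  have hinit' : 2 * C₁ * C₂ * h 0 ≤ H 0 := by
    rw [le_div_iff₀ hh0] at hinit
    linarith
  have hC₃ : 0 < C₃ := by
    have h2 : C₂ / H 0 < 1 / (C₁ * h 0) :=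
      (div_lt_div_iff₀ hH0 (by positivity)).2 (by nlinarith)
    rw [div_eq_mul_inv, one_div, mul_inv] at h2
    rw [hC₃def, sub_pos]
    exact h2
  refine ⟨hC₃, ?_⟩
  intro t ht0 hta
  -- membership facts
  have hmem : ∀ s ∈ Icc (0:ℝ) t, 0 ≤ s ∧ ENNReal.ofReal s < a := fun s hs =>
    ⟨hs.1, lt_of_le_of_lt (ENNReal.ofReal_le_ofReal hs.2) hta⟩
  have hposm : ∀ s ∈ Icc (0:ℝ) t, 0 < H s ∧ 0 < h s := fun s hs =>
    hpos s (hmem s hs).1 (hmem s hs).2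
  -- Step A : w = C₁⁻¹ h⁻¹ - C₂ H⁻¹ is nondecreasing, so H' ≥ C₃
  have hw : ∀ s ∈ Icc (0:ℝ) t, C₃ ≤ C₁⁻¹ * (h s)⁻¹ - C₂ * (H s)⁻¹ := by
    intro s hs
    have hss : Icc (0:ℝ) s ⊆ Icc (0:ℝ) t := Icc_subset_Icc le_rfl hs.2
    exact deriv_nonneg_le'
      (f := fun u => C₁⁻¹ * (h u)⁻¹ - C₂ * (H u)⁻¹)
      (f' := fun u => C₁⁻¹ * (-(h' u) / h u ^ 2) - C₂ * (-(H' u) / H u ^ 2))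
      (fun u hu => by
        obtain ⟨hHu, hhu⟩ := hposm u (hss hu)
        exact (((hhderiv u (hmem u (hss hu)).1 (hmem u (hss hu)).2).inv hhu.ne').const_mul
          C₁⁻¹).sub (((hHderiv u (hmem u (hss hu)).1 (hmem u (hss hu)).2).inv hHu.ne').const_mul C₂))
      (fun u hu => by
        obtain ⟨hHu, hhu⟩ := hposm u (hss hu)
        have h1 := hH' u (hmem u (hss hu)).1 (hmem u (hss hu)).2
        have h2 := hh' u (hmem u (hss hu)).1 (hmem u (hss hu)).2
        have hH2 : 0 < H u ^ 2 := by positivity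
        have hh2 : 0 < h u ^ 2 := by positivity
        show 0 ≤ C₁⁻¹ * (-(h' u) / h u ^ 2) - C₂ * (-(H' u) / H u ^ 2)
        have e1 : C₁⁻¹ * (-(h' u) / h u ^ 2) - C₂ * (-(H' u) / H u ^ 2)
            = (C₂ * H' u / H u ^ 2 - C₁⁻¹ * h' u / h u ^ 2) := by ring
        rw [e1, sub_nonneg, div_le_div_iff₀ hh2 hH2]
        have e2 : C₁⁻¹ * (h u)⁻¹ = (C₁ * h u)⁻¹ := by rw [mul_inv]
        have h3 : (C₁ * h u)⁻¹ ≤ H' u := by rw [← e2]; exact h1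
        have h4 : 0 < (C₁ * h u)⁻¹ := by positivity
        have h5 : C₁⁻¹ * h' u ≤ C₁⁻¹ * (C₂ * h u / H u ^ 2) := by
          exact mul_le_mul_of_nonneg_left h2 (by positivity)
        have h6 : C₂ * (C₁ * h u)⁻¹ ≤ C₂ * H' u :=
          mul_le_mul_of_nonneg_left h3 hC₂.le
        have e3 : C₁⁻¹ * (C₂ * h u / H u ^ 2) * H u ^ 2 = C₂ * (C₁ * h u)⁻¹ * h u ^ 2 := by
          field_simp
        calc C₁⁻¹ * h' u * H u ^ 2 ≤ C₁⁻¹ * (C₂ * h u / H u ^ 2) * H u ^ 2 := by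
              apply mul_le_mul_of_nonneg_right h5 hH2.le
          _ = C₂ * (C₁ * h u)⁻¹ * h u ^ 2 := e3
          _ ≤ C₂ * H' u * h u ^ 2 := mul_le_mul_of_nonneg_right h6 hh2.le)
      hs.1
  -- Step B : H s ≥ C₃ s + H 0 on Icc 0 t
  have hHlow : ∀ s ∈ Icc (0:ℝ) t, C₃ * s + H 0 ≤ H s := by
    intro s hs
    have hss : Icc (0:ℝ) s ⊆ Icc (0:ℝ) t := Icc_subset_Icc le_rfl hs.2
    have := deriv_nonneg_le'
      (f := fun u => H u - C₃ * u) (f' := fun u => H' u - C₃)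
      (fun u hu => by
        have d : HasDerivAt (fun x : ℝ => C₃ * x) C₃ u := by
          simpa using (hasDerivAt_id u).const_mul C₃
        exact (hHderiv u (hmem u (hss hu)).1 (hmem u (hss hu)).2).sub d)
      (fun u hu => by
        have hwu := hw u (hss hu)
        have h1 := hH' u (hmem u (hss hu)).1 (hmem u (hss hu)).2
        have hHu := (hposm u (hss hu)).1
        have hk : C₃ ≤ C₁⁻¹ * (h u)⁻¹ := by
          have : 0 < C₂ * (H u)⁻¹ := by positivity
          linarith
        exact sub_nonneg.2 (le_trans hk h1))
      hs.1
    simp only [mul_zero, sub_zero] at this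
    linarith
  constructor
  · have := hHlow t (right_mem_Icc.2 ht0)
    linarith
  -- Step C : Gronwall for h
  · have hφ : ∀ s ∈ Icc (0:ℝ) t,
        Real.log (h s) + (C₂ / C₃) * (C₃ * s + H 0)⁻¹
          ≤ Real.log (h 0) + (C₂ / C₃) * (H 0)⁻¹ := by
      intro s hs
      have hss : Icc (0:ℝ) s ⊆ Icc (0:ℝ) t := Icc_subset_Icc le_rfl hs.2
      have key := deriv_nonneg_le'
        (f := fun u => -(Real.log (h u) + (C₂ / C₃) * (C₃ * u + H 0)⁻¹))
        (f' := fun u => -(h' u / h u + (C₂ / C₃) * (-C₃ / (C₃ * u + H 0) ^ 2)))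
        (fun u hu => by
          obtain ⟨hHu, hhu⟩ := hposm u (hss hu)
          have hlin : (0:ℝ) < C₃ * u + H 0 := by nlinarith [hu.1]
          have d1 : HasDerivAt (fun u => Real.log (h u)) (h' u / h u) u :=
            (hhderiv u (hmem u (hss hu)).1 (hmem u (hss hu)).2).log hhu.ne'
          have d2 : HasDerivAt (fun u : ℝ => C₃ * u + H 0) C₃ u := by
            simpa using ((hasDerivAt_id u).const_mul C₃).add_const (H 0)
          have d3 := (d2.inv hlin.ne').const_mul (C₂ / C₃)
          exact (d1.add d3).neg)
        (fun u hu => by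
          obtain ⟨hHu, hhu⟩ := hposm u (hss hu)
          have hlin : (0:ℝ) < C₃ * u + H 0 := by nlinarith [hu.1]
          have h2 := hh' u (hmem u (hss hu)).1 (hmem u (hss hu)).2
          have hlowu := hHlow u (hss hu)
          have hH2 : 0 < H u ^ 2 := by positivity
          have hl2 : 0 < (C₃ * u + H 0) ^ 2 := by positivity
          show 0 ≤ -(h' u / h u + (C₂ / C₃) * (-C₃ / (C₃ * u + H 0) ^ 2))
          have e : -(h' u / h u + (C₂ / C₃) * (-C₃ / (C₃ * u + H 0) ^ 2))
              = C₂ / (C₃ * u + H 0) ^ 2 - h' u / h u := by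
            field_simp
            ring
          rw [e, sub_nonneg, div_le_div_iff₀ hhu hl2]
          -- h' u * (C₃u+H0)^2 ≤ C₂ * h u
          have key1 : h' u ≤ C₂ * h u / H u ^ 2 := h2
          have key2 : C₂ * h u / H u ^ 2 ≤ C₂ * h u / (C₃ * u + H 0) ^ 2 := by
            apply div_le_div_of_nonneg_left (by positivity) hl2
            nlinarith
          have key3 : h' u ≤ C₂ * h u / (C₃ * u + H 0) ^ 2 := key1.trans key2
          rw [div_eq_mul_inv] at key3
          calc h' u * (C₃ * u + H 0) ^ 2
              ≤ C₂ * h u * ((C₃ * u + H 0) ^ 2)⁻¹ * (C₃ * u + H 0) ^ 2 :=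
                mul_le_mul_of_nonneg_right key3 hl2.le
            _ = C₂ * h u := by field_simp)
        hs.1
      simp only [mul_zero, zero_add] at key
      linarith
    have := hφ t (right_mem_Icc.2 ht0)
    have hht := (hposm t (right_mem_Icc.2 ht0)).2
    have hlin : (0:ℝ) < C₃ * t + H 0 := by nlinarith
    have hlog : Real.log (h t) ≤ Real.log (h 0) + C₂ / (C₃ * H 0) := by
      have e : (C₂ / C₃) * (H 0)⁻¹ = C₂ / (C₃ * H 0) := by
        field_simp
      have pos : 0 ≤ (C₂ / C₃) * (C₃ * t + H 0)⁻¹ := by positivity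
      linarith [this, e.le, e.ge]
    calc h t = Real.exp (Real.log (h t)) := (Real.exp_log hht).symm
      _ ≤ Real.exp (Real.log (h 0) + C₂ / (C₃ * H 0)) := Real.exp_le_exp.2 hlog
      _ = h 0 * Real.exp (C₂ / (C₃ * H 0)) := by
          rw [Real.exp_add, Real.exp_log hh0]
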